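/- Let t ↦ Z_t be a bounded measurable family of 2d×m real matrices on [0,1] with Γ₁ = ∫₀¹ X_t X_tᵀ dt invertible. Let (s,t) ↦ ηˢ(t) ∈ ℝ^{2d} be a C¹ family such that for each s the curve t ↦ ηˢ(t) solves η̇ = s·Z_t Z_tᵀ J η and the q-component of ηˢ(0) is zero for every s. If at some parameter value s one has ⟨J ηˢ(1), ∂ηˢ/∂s (1)⟩ = 0, then ηˢ(1) = 0. -/

import Mathlib

/-!
For solutions `η`, `ξ` of the scaled Jacobi equation with parameters `a`, `b`, the symplectic
pairing `⟨J η, ξ⟩` is absolutely continuous with derivative `(b - a) ⟨Zᵀ J η, Zᵀ J ξ⟩`, because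
`Jᵀ = -J`. As `η(0)` and `ξ(0)` lie in the Lagrangian subspace `{q = 0}`, this gives
`⟨J ηˢ(1), ηᵘ(1)⟩ = (u - s) ∫₀¹ ⟨Zᵀ J ηˢ, Zᵀ J ηᵘ⟩`, and differentiating in `u` at `u = s` gives
`⟨J ηˢ(1), ∂ₛηˢ(1)⟩ = ∫₀¹ |Zᵀ J ηˢ|²`; no variational equation for `∂ₛηˢ` is needed. If this
vanishes then `Zᵀ J ηˢ = 0` a.e., so `ηˢ` is constant, equal to `(p, 0)`; then `X_tᵀ p = 0` a.e.,
hence `Γ₁ p = 0` and `p = 0`.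
-/

open MeasureTheory Filter Topology Matrix

noncomputable section

/-- The standard symplectic `2d × 2d` matrix `J = [[0, -I],[I, 0]]`, over `ℝ`. -/
def Jmat (d : ℕ) : Matrix (Fin (d + d)) (Fin (d + d)) ℝ :=
  Matrix.reindex finSumFinEquiv finSumFinEquiv (Matrix.fromBlocks 0 (-1) 1 0)

/-- The bottom `d × m` block `X_t` of the block matrix `Z_t = (Y_t; X_t)`. -/
def Xblock {d m : ℕ} (Z : ℝ → Matrix (Fin (d + d)) (Fin m) ℝ) (t : ℝ) :
    Matrix (Fin d) (Fin m) ℝ :=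
  Matrix.of fun i j => Z t (finSumFinEquiv (Sum.inr i)) j

/-- Entrywise integral of a matrix-valued function over a subset of `ℝ`. -/
def mSetIntegral {n p : Type*} (s : Set ℝ) (f : ℝ → Matrix n p ℝ) : Matrix n p ℝ :=
  Matrix.of fun i j => ∫ t in s, f t i j

/-- Carathéodory solution of `η̇ = s · Z_t Z_tᵀ J η` on `[0,1]`,
via the equivalent integral equation. -/
def IsScaledJacobiSolution {d m : ℕ} (Z : ℝ → Matrix (Fin (d + d)) (Fin m) ℝ)
    (s : ℝ) (η : ℝ → Fin (d + d) → ℝ) : Prop :=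
  ∀ t ∈ Set.Icc (0:ℝ) 1,
    η t = η 0 + ∫ τ in (0:ℝ)..t, s • (Z τ * (Z τ)ᵀ * Jmat d).mulVec (η τ)

open Set

section Primitive

variable {E F : Type*} [NormedAddCommGroup E] [NormedSpace ℝ E]
  [NormedAddCommGroup F] [NormedSpace ℝ F]

def IsPrimitiveOn (u f : ℝ → E) (a b : ℝ) : Prop :=
  ∀ t ∈ Icc a b, u t = u a + ∫ τ in a..t, f τ

variable {u f : ℝ → E} {a b : ℝ}

theorem IsPrimitiveOn.continuousOn (hf : IntervalIntegrable f volume a b)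
    (hu : IsPrimitiveOn u f a b) : ContinuousOn u (Icc a b) :=
  (continuousOn_const.add ((intervalIntegral.continuousOn_primitive_interval' hf
    left_mem_uIcc).mono Icc_subset_uIcc)).congr hu

theorem IsPrimitiveOn.map [CompleteSpace E] [CompleteSpace F] (L : E →L[ℝ] F)
    (hf : IntervalIntegrable f volume a b) (hu : IsPrimitiveOn u f a b) :
    IsPrimitiveOn (fun t => L (u t)) (fun t => L (f t)) a b := by
  intro t ht
  dsimp only
  rw [hu t ht, map_add, L.intervalIntegral_comp_comm
    (hf.mono_set (uIcc_subset_uIcc left_mem_uIcc (Icc_subset_uIcc ht)))]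

theorem IntervalIntegrable.eval {ι : Type*} [Fintype ι] {f : ℝ → ι → ℝ}
    (hf : IntervalIntegrable f volume a b) (i : ι) :
    IntervalIntegrable (fun t => f t i) volume a b :=
  intervalIntegrable_iff.2 ((intervalIntegrable_iff.1 hf).eval i)

theorem IntervalIntegrable.mulVec {m n : Type*} [Fintype m] [Fintype n] {f : ℝ → n → ℝ}
    {a b : ℝ} (M : Matrix m n ℝ) (hf : IntervalIntegrable f volume a b) :
    IntervalIntegrable (fun t => M *ᵥ f t) volume a b :=
  let L := LinearMap.toContinuousLinearMap M.mulVecLin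
  ⟨L.integrable_comp hf.1, L.integrable_comp hf.2⟩

theorem IsPrimitiveOn.eval {ι : Type*} [Fintype ι] {u f : ℝ → ι → ℝ}
    (hf : IntervalIntegrable f volume a b) (hu : IsPrimitiveOn u f a b) (i : ι) :
    IsPrimitiveOn (fun t => u t i) (fun t => f t i) a b :=
  hu.map (ContinuousLinearMap.proj i) hf

theorem IsPrimitiveOn.mulVec {m n : Type*} [Fintype m] [Fintype n] {u f : ℝ → n → ℝ}
    (M : Matrix m n ℝ) (hf : IntervalIntegrable f volume a b) (hu : IsPrimitiveOn u f a b) :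
    IsPrimitiveOn (fun t => M *ᵥ u t) (fun t => M *ᵥ f t) a b :=
  hu.map (LinearMap.toContinuousLinearMap M.mulVecLin) hf

theorem IsPrimitiveOn.integral_mul_add_mul {u v f g : ℝ → ℝ} (hab : a ≤ b)
    (hf : IntervalIntegrable f volume a b) (hg : IntervalIntegrable g volume a b)
    (hu : IsPrimitiveOn u f a b) (hv : IsPrimitiveOn v g a b) :
    ∫ t in a..b, f t * v t + u t * g t = u b * v b - u a * v a := by
  have hU : AbsolutelyContinuousOnInterval (fun x => u a + ∫ τ in a..x, f τ) a b :=
    contDiffOn_const.absolutelyContinuousOnInterval.add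
      (hf.absolutelyContinuousOnInterval_intervalIntegral left_mem_uIcc)
  have hV : AbsolutelyContinuousOnInterval (fun x => v a + ∫ τ in a..x, g τ) a b :=
    contDiffOn_const.absolutelyContinuousOnInterval.add
      (hg.absolutelyContinuousOnInterval_intervalIntegral left_mem_uIcc)
  have hb : b ∈ Icc a b := right_mem_Icc.2 hab
  have key := hU.integral_deriv_mul_eq_sub hV
  simp only [intervalIntegral.integral_same, add_zero] at key
  rw [hu b hb, hv b hb, ← key]
  refine intervalIntegral.integral_congr_ae ?_
  -- Lebesgue differentiation identifies the a.e. derivatives of these primitives with `f`, `g`.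
  filter_upwards [hf.ae_hasDerivAt_integral, hg.ae_hasDerivAt_integral] with x hfx hgx hx
  have hx' : x ∈ uIcc a b := uIoc_subset_uIcc hx
  have hxI : x ∈ Icc a b := by rwa [uIcc_of_le hab] at hx'
  rw [((hfx hx' a left_mem_uIcc).const_add (u a)).deriv,
    ((hgx hx' a left_mem_uIcc).const_add (v a)).deriv, ← hu x hxI, ← hv x hxI]

theorem IsPrimitiveOn.integral_dotProduct_add {ι : Type*} [Fintype ι] {u v f g : ℝ → ι → ℝ}
    (hab : a ≤ b) (hf : IntervalIntegrable f volume a b) (hg : IntervalIntegrable g volume a b)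
    (hu : IsPrimitiveOn u f a b) (hv : IsPrimitiveOn v g a b) :
    ∫ t in a..b, f t ⬝ᵥ v t + u t ⬝ᵥ g t = u b ⬝ᵥ v b - u a ⬝ᵥ v a := by
  have hcont : ∀ {w h : ℝ → ι → ℝ}, IntervalIntegrable h volume a b → IsPrimitiveOn w h a b →
      ∀ i, ContinuousOn (fun t => w t i) (uIcc a b) := fun hh hw i =>
    uIcc_of_le hab ▸ (hw.eval hh i).continuousOn (hh.eval i)
  simp only [dotProduct, ← Finset.sum_add_distrib, ← Finset.sum_sub_distrib]
  rw [intervalIntegral.integral_finsetSum fun i _ =>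
    ((hf.eval i).mul_continuousOn (hcont hg hv i)).add
      ((hg.eval i).continuousOn_mul (hcont hf hu i))]
  exact Finset.sum_congr rfl fun i _ =>
    (hu.eval hf i).integral_mul_add_mul hab (hf.eval i) (hg.eval i) (hv.eval hg i)

end Primitive

section EssentiallyBounded

variable {α : Type*} [MeasurableSpace α] {μ : Measure α} {ι κ ν : Type*} [Fintype κ]

theorem memLp_top_mul_apply {A : α → Matrix ι κ ℝ} {B : α → Matrix κ ν ℝ}
    (hA : ∀ i k, MemLp (fun x => A x i k) ⊤ μ) (hB : ∀ k j, MemLp (fun x => B x k j) ⊤ μ)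
    (i : ι) (j : ν) : MemLp (fun x => (A x * B x) i j) ⊤ μ :=
  memLp_finsetSum _ fun k _ => (hB k j).mul' (hA i k)

theorem memLp_top_dotProduct {v w : α → κ → ℝ} (hv : MemLp v ⊤ μ) (hw : MemLp w ⊤ μ) :
    MemLp (fun x => v x ⬝ᵥ w x) ⊤ μ :=
  memLp_finsetSum _ fun k _ => (hw.eval k).mul' (hv.eval k)

theorem memLp_top_mulVec [Fintype ι] {A : α → Matrix ι κ ℝ} {v : α → κ → ℝ}
    (hA : ∀ i k, MemLp (fun x => A x i k) ⊤ μ) (hv : MemLp v ⊤ μ) :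
    MemLp (fun x => A x *ᵥ v x) ⊤ μ :=
  MemLp.of_eval fun i => memLp_top_dotProduct (MemLp.of_eval (hA i)) hv

theorem Continuous.memLp_top_restrict {E : Type*} [NormedAddCommGroup E] {f : ℝ → E}
    (hf : Continuous f) {K : Set ℝ} (hK : IsCompact K) : MemLp f ⊤ (volume.restrict K) := by
  obtain ⟨C, hC⟩ := hK.exists_bound_of_continuousOn hf.continuousOn
  exact memLp_top_of_bound hf.aestronglyMeasurable C
    (ae_restrict_of_forall_mem hK.measurableSet hC)

theorem MeasureTheory.MemLp.intervalIntegrable_of_top {E : Type*} [NormedAddCommGroup E]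
    {f : ℝ → E} {a b : ℝ} (hab : a ≤ b) (hf : MemLp f ⊤ (volume.restrict (Icc a b))) :
    IntervalIntegrable f volume a b :=
  (intervalIntegrable_iff_integrableOn_Icc_of_le hab).2 (hf.integrable le_top)

end EssentiallyBounded

theorem continuousAt_intervalIntegral_dotProduct {ι : Type*} [Fintype ι] {c : ℝ → ι → ℝ}
    {φ : ℝ → ℝ → ι → ℝ} {a b : ℝ} (hc : IntervalIntegrable c volume a b)
    (hφ : Continuous (Function.uncurry φ)) (s : ℝ) :
    ContinuousAt (fun u => ∫ t in a..b, c t ⬝ᵥ φ u t) s := by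
  obtain ⟨C, hC⟩ := ((isCompact_closedBall s 1).prod isCompact_uIcc).exists_bound_of_continuousOn
    hφ.continuousOn
  have hφu : ∀ u, Continuous (φ u) := fun u => hφ.comp (Continuous.prodMk_right u)
  refine intervalIntegral.continuousAt_of_dominated_interval
    (bound := fun t => C * ∑ i, |c t i|) (Eventually.of_forall fun u =>
      (continuous_fst.dotProduct continuous_snd).comp_aestronglyMeasurable₂
        hc.def'.aestronglyMeasurable (hφu u).aestronglyMeasurable) ?_
    (by simpa only [Finset.sum_apply] using
      (IntervalIntegrable.sum Finset.univ fun i _ => (hc.eval i).abs).const_mul C) ?_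
  · filter_upwards [Metric.closedBall_mem_nhds s one_pos] with u hu
    refine ae_of_all _ fun t ht => ?_
    rw [Real.norm_eq_abs, Finset.mul_sum]
    refine (Finset.abs_sum_le_sum_abs _ _).trans (Finset.sum_le_sum fun i _ => ?_)
    rw [abs_mul, mul_comm C]
    refine mul_le_mul_of_nonneg_left ?_ (abs_nonneg _)
    exact (norm_le_pi_norm (φ u t) i).trans (hC (u, t) ⟨hu, uIoc_subset_uIcc ht⟩)
  · exact ae_of_all _ fun t _ => (continuous_const.dotProduct
      (hφ.comp (continuous_id.prodMk continuous_const))).continuousAt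

theorem hasDerivAt_sub_mul_of_continuousAt {I : ℝ → ℝ} {s : ℝ} (hI : ContinuousAt I s) :
    HasDerivAt (fun u => (u - s) * I u) (I s) s := by
  rw [hasDerivAt_iff_tendsto_slope]
  refine (hI.tendsto.mono_left nhdsWithin_le_nhds).congr' ?_
  filter_upwards [self_mem_nhdsWithin] with u hu
  rw [slope_def_field, sub_self, zero_mul, sub_zero, mul_div_cancel_left₀ _ (sub_ne_zero.2 hu)]

theorem HasDerivAt.const_dotProduct {ι : Type*} [Fintype ι] {φ : ℝ → ι → ℝ} {φ' : ι → ℝ}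
    {x : ℝ} (c : ι → ℝ) (h : HasDerivAt φ φ' x) :
    HasDerivAt (fun u => c ⬝ᵥ φ u) (c ⬝ᵥ φ') x := by
  simpa only [dotProduct] using
    HasDerivAt.fun_sum fun i _ => (hasDerivAt_pi.1 h i).const_mul (c i)

theorem ae_eq_zero_of_integral_dotProduct_self_eq_zero {ι : Type*} [Fintype ι]
    {w : ℝ → ι → ℝ} {a b : ℝ} (hab : a ≤ b)
    (hw : IntervalIntegrable (fun t => w t ⬝ᵥ w t) volume a b)
    (h : ∫ t in a..b, w t ⬝ᵥ w t = 0) : ∀ᵐ t ∂volume.restrict (Ioc a b), w t = 0 := by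
  have hnonneg : ∀ t, 0 ≤ w t ⬝ᵥ w t := fun t => Fintype.sum_nonneg fun i => mul_self_nonneg _
  filter_upwards [(intervalIntegral.integral_eq_zero_iff_of_le_of_nonneg_ae hab
    (ae_of_all _ hnonneg) hw).1 h] with t ht using dotProduct_self_eq_zero.1 ht

theorem mSetIntegral_mulVec {n p : Type*} [Fintype p] {s : Set ℝ} {f : ℝ → Matrix n p ℝ}
    (hf : ∀ i j, IntegrableOn (fun t => f t i j) s) (v : p → ℝ) :
    mSetIntegral s f *ᵥ v = fun i => ∫ t in s, (f t *ᵥ v) i := by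
  ext i
  simp only [mulVec, dotProduct, mSetIntegral, of_apply]
  rw [integral_finsetSum _ fun j _ => (hf i j).mul_const (v j)]
  simp_rw [integral_mul_const]

theorem mul_transpose_mul_mulVec {n m : Type*} [Fintype n] [Fintype m] (Z : Matrix n m ℝ)
    (K : Matrix n n ℝ) (v : n → ℝ) : (Z * Zᵀ * K) *ᵥ v = Z *ᵥ (Zᵀ *ᵥ (K *ᵥ v)) := by
  rw [mulVec_mulVec, mulVec_mulVec, Matrix.mul_assoc]

theorem wronskian_deriv_of_transpose_eq_neg {n m : Type*} [Fintype n] [Fintype m]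
    {K : Matrix n n ℝ} (hK : Kᵀ = -K) (Z : Matrix n m ℝ) (a b : ℝ) (x y : n → ℝ) :
    (K *ᵥ (a • (Z * Zᵀ * K) *ᵥ x)) ⬝ᵥ y + (K *ᵥ x) ⬝ᵥ (b • (Z * Zᵀ * K) *ᵥ y) =
      (b - a) * ((Zᵀ *ᵥ (K *ᵥ x)) ⬝ᵥ (Zᵀ *ᵥ (K *ᵥ y))) := by
  set w := Zᵀ *ᵥ (K *ᵥ x)
  set w' := Zᵀ *ᵥ (K *ᵥ y)
  have h₁ : (K *ᵥ (Z *ᵥ w)) ⬝ᵥ y = -(w ⬝ᵥ w') := by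
    rw [dotProduct_comm, ← dotProduct_transpose_mulVec, hK, neg_mulVec, dotProduct_neg,
      dotProduct_comm, ← dotProduct_transpose_mulVec]
  have h₂ : (K *ᵥ x) ⬝ᵥ (Z *ᵥ w') = w ⬝ᵥ w' := by
    rw [← dotProduct_transpose_mulVec, dotProduct_comm]
  rw [mul_transpose_mul_mulVec, mul_transpose_mul_mulVec, mulVec_smul, smul_dotProduct,
    dotProduct_smul, h₁, h₂, smul_eq_mul, smul_eq_mul]
  ring

section Symplectic

variable {d m : ℕ}

theorem Jmat_transpose (d : ℕ) : (Jmat d)ᵀ = -Jmat d := by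
  ext a b
  simp only [Jmat, reindex_apply, transpose_apply, submatrix_apply, Matrix.neg_apply]
  rcases finSumFinEquiv.symm a with i | i <;> rcases finSumFinEquiv.symm b with j | j <;>
    simp [fromBlocks, one_apply, eq_comm]

theorem Jmat_mulVec_inl (v : Fin (d + d) → ℝ) (i : Fin d) :
    (Jmat d *ᵥ v) (finSumFinEquiv (Sum.inl i)) = -v (finSumFinEquiv (Sum.inr i)) := by
  rw [mulVec, dotProduct, ← finSumFinEquiv.sum_comp]
  simp only [Jmat, reindex_apply, submatrix_apply, Equiv.symm_apply_apply, Fintype.sum_sum_type]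
  simp [one_apply, ite_mul]

theorem Jmat_mulVec_inr (v : Fin (d + d) → ℝ) (i : Fin d) :
    (Jmat d *ᵥ v) (finSumFinEquiv (Sum.inr i)) = v (finSumFinEquiv (Sum.inl i)) := by
  rw [mulVec, dotProduct, ← finSumFinEquiv.sum_comp]
  simp only [Jmat, reindex_apply, submatrix_apply, Equiv.symm_apply_apply, Fintype.sum_sum_type]
  simp [one_apply, ite_mul]

theorem Jmat_mulVec_dotProduct_eq_zero {v w : Fin (d + d) → ℝ}
    (hv : ∀ i, v (finSumFinEquiv (Sum.inr i)) = 0) (hw : ∀ i, w (finSumFinEquiv (Sum.inr i)) = 0) :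
    (Jmat d *ᵥ v) ⬝ᵥ w = 0 := by
  rw [dotProduct, ← finSumFinEquiv.sum_comp]
  simp only [Fintype.sum_sum_type, Jmat_mulVec_inl, hv, hw, neg_zero, zero_mul, mul_zero,
    Finset.sum_const_zero, add_zero]

theorem transpose_mulVec_Jmat_mulVec (Z : ℝ → Matrix (Fin (d + d)) (Fin m) ℝ) (t : ℝ)
    {v : Fin (d + d) → ℝ} (hv : ∀ i, v (finSumFinEquiv (Sum.inr i)) = 0) :
    (Z t)ᵀ *ᵥ (Jmat d *ᵥ v) = (Xblock Z t)ᵀ *ᵥ fun i => v (finSumFinEquiv (Sum.inl i)) := by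
  ext j
  rw [mulVec_transpose, mulVec_transpose, vecMul, vecMul, dotProduct, dotProduct,
    ← finSumFinEquiv.sum_comp]
  simp only [Fintype.sum_sum_type, Jmat_mulVec_inl, Jmat_mulVec_inr, hv, neg_zero, zero_mul,
    Finset.sum_const_zero, zero_add]
  rfl

end Symplectic

section JacobiSolution

variable {d m : ℕ} {Z : ℝ → Matrix (Fin (d + d)) (Fin m) ℝ} {η ξ : ℝ → Fin (d + d) → ℝ}
  {s : ℝ}

theorem IsScaledJacobiSolution.isPrimitiveOn (hη : IsScaledJacobiSolution Z s η) :
    IsPrimitiveOn η (fun τ => s • (Z τ * (Z τ)ᵀ * Jmat d) *ᵥ η τ) 0 1 :=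
  hη

theorem memLp_top_transpose_mulVec_Jmat_mulVec
    (hZ : ∀ i j, MemLp (fun t => Z t i j) ⊤ (volume.restrict (Icc 0 1))) (hη : Continuous η) :
    MemLp (fun t => (Z t)ᵀ *ᵥ (Jmat d *ᵥ η t)) ⊤ (volume.restrict (Icc 0 1)) :=
  memLp_top_mulVec (fun i j => hZ j i)
    (memLp_top_mulVec (fun _ _ => memLp_const _) (hη.memLp_top_restrict isCompact_Icc))

theorem intervalIntegrable_jacobiField
    (hZ : ∀ i j, MemLp (fun t => Z t i j) ⊤ (volume.restrict (Icc 0 1))) (hη : Continuous η)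
    (s : ℝ) : IntervalIntegrable (fun τ => s • (Z τ * (Z τ)ᵀ * Jmat d) *ᵥ η τ) volume 0 1 := by
  simp_rw [mul_transpose_mul_mulVec]
  exact ((memLp_top_mulVec hZ (memLp_top_transpose_mulVec_Jmat_mulVec hZ hη)).const_smul
    s).intervalIntegrable_of_top zero_le_one

theorem IsScaledJacobiSolution.wronskian
    (hZ : ∀ i j, MemLp (fun t => Z t i j) ⊤ (volume.restrict (Icc 0 1))) {a b : ℝ}
    (hηc : Continuous η) (hξc : Continuous ξ)
    (hη : IsScaledJacobiSolution Z a η) (hξ : IsScaledJacobiSolution Z b ξ) :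
    (Jmat d *ᵥ η 1) ⬝ᵥ ξ 1 - (Jmat d *ᵥ η 0) ⬝ᵥ ξ 0 =
      (b - a) * ∫ t in 0..1, (Z t)ᵀ *ᵥ (Jmat d *ᵥ η t) ⬝ᵥ (Z t)ᵀ *ᵥ (Jmat d *ᵥ ξ t) := by
  have hf := intervalIntegrable_jacobiField hZ hηc a
  have hg := intervalIntegrable_jacobiField hZ hξc b
  rw [← (hη.isPrimitiveOn.mulVec (Jmat d) hf).integral_dotProduct_add zero_le_one
    (hf.mulVec _) hg hξ.isPrimitiveOn, ← intervalIntegral.integral_const_mul]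
  exact intervalIntegral.integral_congr fun t _ =>
    wronskian_deriv_of_transpose_eq_neg (Jmat_transpose d) (Z t) a b (η t) (ξ t)

theorem IsScaledJacobiSolution.eq_const_of_ae_eq_zero (hη : IsScaledJacobiSolution Z s η)
    (hw : ∀ᵐ t ∂volume.restrict (Ioc 0 1), (Z t)ᵀ *ᵥ (Jmat d *ᵥ η t) = 0) :
    ∀ t ∈ Icc (0 : ℝ) 1, η t = η 0 := by
  intro t ht
  rw [hη t ht, add_eq_left]
  rw [ae_restrict_iff' measurableSet_Ioc] at hw
  refine intervalIntegral.integral_zero_ae ?_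
  filter_upwards [hw] with τ hτ hτt
  rw [uIoc_of_le ht.1] at hτt
  rw [mul_transpose_mul_mulVec, hτ ⟨hτt.1, hτt.2.trans ht.2⟩, mulVec_zero, smul_zero]

theorem IsScaledJacobiSolution.eq_zero_of_integral_eq_zero
    (hZ : ∀ i j, MemLp (fun t => Z t i j) ⊤ (volume.restrict (Icc 0 1)))
    (hΓ : IsUnit (mSetIntegral (Icc (0 : ℝ) 1) fun t => Xblock Z t * (Xblock Z t)ᵀ).det)
    (hηc : Continuous η) (hη : IsScaledJacobiSolution Z s η)
    (hq : ∀ i, η 0 (finSumFinEquiv (Sum.inr i)) = 0)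
    (h : ∫ t in 0..1, (Z t)ᵀ *ᵥ (Jmat d *ᵥ η t) ⬝ᵥ (Z t)ᵀ *ᵥ (Jmat d *ᵥ η t) = 0) :
    η 1 = 0 := by
  set p : Fin d → ℝ := fun i => η 0 (finSumFinEquiv (Sum.inl i))
  have hw₂ := memLp_top_transpose_mulVec_Jmat_mulVec hZ hηc
  have hw := ae_eq_zero_of_integral_dotProduct_self_eq_zero zero_le_one
    ((memLp_top_dotProduct hw₂ hw₂).intervalIntegrable_of_top zero_le_one) h
  have hconst := hη.eq_const_of_ae_eq_zero hw
  have hXp : ∀ᵐ t ∂volume.restrict (Icc 0 1), (Xblock Z t)ᵀ *ᵥ p = 0 := by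
    rw [← Measure.restrict_congr_set Ioc_ae_eq_Icc]
    filter_upwards [hw, ae_restrict_mem measurableSet_Ioc] with t ht htI
    rwa [hconst t (Ioc_subset_Icc_self htI), transpose_mulVec_Jmat_mulVec Z t hq] at ht
  have hp : p = 0 := by
    refine eq_zero_of_mulVec_eq_zero hΓ.ne_zero ?_
    rw [mSetIntegral_mulVec fun i j => (memLp_top_mul_apply (A := Xblock Z)
      (B := fun t => (Xblock Z t)ᵀ) (fun _ k => hZ _ k) (fun k _ => hZ _ k) i j).integrable le_top]
    ext i
    refine integral_eq_zero_of_ae ?_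
    filter_upwards [hXp] with t ht
    rw [← mulVec_mulVec, ht, mulVec_zero]
    rfl
  rw [hconst 1 (right_mem_Icc.2 zero_le_one)]
  ext k
  obtain ⟨k | k, rfl⟩ := finSumFinEquiv.surjective k
  · exact congrFun hp k
  · exact hq k

end JacobiSolution

theorem continuousAt_integral_transpose_mulVec_Jmat_mulVec {d m : ℕ}
    {Z : ℝ → Matrix (Fin (d + d)) (Fin m) ℝ}
    (hZ : ∀ i j, MemLp (fun t => Z t i j) ⊤ (volume.restrict (Icc 0 1)))
    {η : ℝ → ℝ → Fin (d + d) → ℝ} (hη : Continuous fun p : ℝ × ℝ => η p.1 p.2) (s : ℝ) :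
    ContinuousAt (fun u => ∫ t in 0..1,
      (Z t)ᵀ *ᵥ (Jmat d *ᵥ η s t) ⬝ᵥ (Z t)ᵀ *ᵥ (Jmat d *ᵥ η u t)) s := by
  have hηs : Continuous (η s) := hη.comp (Continuous.prodMk_right s)
  -- Move all of `Z` to the `s`-side, so that `u` enters only through the continuous `η`.
  have hmove : ∀ u t, (Z t)ᵀ *ᵥ (Jmat d *ᵥ η s t) ⬝ᵥ (Z t)ᵀ *ᵥ (Jmat d *ᵥ η u t) =
      (Jmat d)ᵀ *ᵥ (Z t *ᵥ ((Z t)ᵀ *ᵥ (Jmat d *ᵥ η s t))) ⬝ᵥ η u t := fun u t => by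
    rw [dotProduct_transpose_mulVec, dotProduct_comm, ← dotProduct_transpose_mulVec,
      dotProduct_comm]
  have hc : MemLp (fun t => (Jmat d)ᵀ *ᵥ (Z t *ᵥ ((Z t)ᵀ *ᵥ (Jmat d *ᵥ η s t)))) ⊤
      (volume.restrict (Icc 0 1)) := memLp_top_mulVec (fun _ _ => memLp_const _)
    (memLp_top_mulVec hZ (memLp_top_transpose_mulVec_Jmat_mulVec hZ hηs))
  simp_rw [hmove]
  exact continuousAt_intervalIntegral_dotProduct (hc.intervalIntegrable_of_top zero_le_one)
    (φ := η) hη s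

theorem jacobi_family_endpoint_vanishes_general
    (d m : ℕ)
    (Z : ℝ → Matrix (Fin (d + d)) (Fin m) ℝ)
    (hZmeas : ∀ i j, Measurable fun t => Z t i j)
    (hZbdd : ∃ C : ℝ, ∀ t ∈ Set.Icc (0:ℝ) 1, ∀ i j, |Z t i j| ≤ C)
    (hΓinv : IsUnit (mSetIntegral (Set.Icc (0:ℝ) 1)
      (fun t => Xblock Z t * (Xblock Z t)ᵀ)).det)
    (η ηs : ℝ → ℝ → Fin (d + d) → ℝ)
    (hηcont : Continuous fun p : ℝ × ℝ => η p.1 p.2)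
    (hηsol : ∀ s : ℝ, IsScaledJacobiSolution Z s (η s))
    (hηderiv : ∀ (s t : ℝ), HasDerivAt (fun u : ℝ => η u t) (ηs s t) s)
    (hq0 : ∀ (s : ℝ) (i : Fin d), η s 0 (finSumFinEquiv (Sum.inr i)) = 0) :
    ∀ s : ℝ, ((Jmat d).mulVec (η s 1)) ⬝ᵥ ηs s 1 = 0 → η s 1 = 0 := by
  intro s hs
  obtain ⟨C, hC⟩ := hZbdd
  have hZ : ∀ i j, MemLp (fun t => Z t i j) ⊤ (volume.restrict (Icc 0 1)) := fun i j =>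
    memLp_top_of_bound (hZmeas i j).aestronglyMeasurable C
      (ae_restrict_of_forall_mem measurableSet_Icc fun t ht => hC t ht i j)
  have hηc : ∀ u, Continuous (η u) := fun u => hηcont.comp (Continuous.prodMk_right u)
  set I : ℝ → ℝ := fun u => ∫ t in 0..1,
    (Z t)ᵀ *ᵥ (Jmat d *ᵥ η s t) ⬝ᵥ (Z t)ᵀ *ᵥ (Jmat d *ᵥ η u t)
  have hwronskian : ∀ u, (Jmat d *ᵥ η s 1) ⬝ᵥ η u 1 = (u - s) * I u := fun u => by
    have h := (hηsol s).wronskian hZ (hηc s) (hηc u) (hηsol u)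
    rwa [Jmat_mulVec_dotProduct_eq_zero (hq0 s) (hq0 u), sub_zero] at h
  have hI0 : I s = 0 := by
    have hderiv := (hasDerivAt_sub_mul_of_continuousAt
      (continuousAt_integral_transpose_mulVec_Jmat_mulVec hZ hηcont s)).congr_of_eventuallyEq
        (Eventually.of_forall hwronskian)
    rw [← hs]
    exact hderiv.unique ((hηderiv s 1).const_dotProduct _)
  exact (hηsol s).eq_zero_of_integral_eq_zero hZ hΓinv (hηc s) (hq0 s) hI0

/-- **Lemma 1.**  For a C¹ family `ηˢ` of solutions of `η̇ = s Z_t Z_tᵀ J η` with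
`q`-component of `ηˢ(0)` vanishing, if `⟨J ηˢ(1), ∂ηˢ/∂s(1)⟩ = 0` then `ηˢ(1) = 0`
(provided `Γ₁ = ∫₀¹ X_t X_tᵀ dt` is invertible). -/
theorem jacobi_family_endpoint_vanishes
    (d m : ℕ) (hd : 0 < d) (hm : 0 < m)
    (Z : ℝ → Matrix (Fin (d + d)) (Fin m) ℝ)
    (hZmeas : ∀ i j, Measurable fun t => Z t i j)
    (hZbdd : ∃ C : ℝ, ∀ t ∈ Set.Icc (0:ℝ) 1, ∀ i j, |Z t i j| ≤ C)
    (hΓinv : IsUnit (mSetIntegral (Set.Icc (0:ℝ) 1)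
      (fun t => Xblock Z t * (Xblock Z t)ᵀ)).det)
    (η ηs : ℝ → ℝ → Fin (d + d) → ℝ)
    (hηcont : Continuous fun p : ℝ × ℝ => η p.1 p.2)
    (hηscont : Continuous fun p : ℝ × ℝ => ηs p.1 p.2)
    (hηsol : ∀ s : ℝ, IsScaledJacobiSolution Z s (η s))
    (hηderiv : ∀ (s t : ℝ), HasDerivAt (fun u : ℝ => η u t) (ηs s t) s)
    (hq0 : ∀ (s : ℝ) (i : Fin d), η s 0 (finSumFinEquiv (Sum.inr i)) = 0) :
    ∀ s : ℝ, ((Jmat d).mulVec (η s 1)) ⬝ᵥ ηs s 1 = 0 → η s 1 = 0 :=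
  jacobi_family_endpoint_vanishes_general d m Z hZmeas hZbdd hΓinv η ηs hηcont hηsol hηderiv hq0

end
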